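/- For h < 0, b > 0, ω = √(2b), τ₀ ∈ ℝ, the principal-value limit lim_{N→∞} ∫_{−Nπ/(2ω)}^{Nπ/(2ω)} (b + 1/(2|h| + (τ−τ₀)²))·sin(2ωτ) dτ = π sin(2ωτ₀) e^{−2ω√(2|h|)}/√(2|h|). -/

import Mathlib

/-!
The constant `b` contributes nothing, since `sin (2ωτ)` is odd and the intervals are symmetric.
What remains is the integral of `sin (2ωτ) / (a² + (τ - τ₀)²)` with `a = √(2|h|)`, which is
absolutely convergent, so the symmetric truncations converge to it. After the shift
`τ = s + τ₀` it is the imaginary part of `e^{2iωτ₀} ∫ e^{2iωs} / (a² + s²) ds`, and the last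
integral is `π e^{-2ωa} / a` by Fourier inversion: `x ↦ e^{-a|x|}` has Fourier transform
`w ↦ 2a / (a² + (2πw)²)`.
-/

open Real Filter intervalIntegral MeasureTheory Set Complex
open scoped FourierTransform

lemma integrable_exp_neg_mul_abs {a : ℝ} (ha : 0 < a) :
    Integrable fun x : ℝ => rexp (-(a * |x|)) := by
  rw [← integrableOn_univ, ← Iic_union_Ioi (a := 0)]
  refine IntegrableOn.union ?_ ?_
  · refine (integrableOn_exp_mul_Iic ha 0).congr_fun (fun x hx => ?_) measurableSet_Iic
    simp [abs_of_nonpos (show x ≤ 0 from hx)]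
  · refine (integrableOn_exp_mul_Ioi (neg_lt_zero.2 ha) 0).congr_fun (fun x hx => ?_)
      measurableSet_Ioi
    simp [abs_of_pos (show 0 < x from hx)]

lemma fourier_exp_neg_mul_abs {a : ℝ} (ha : 0 < a) (w : ℝ) :
    𝓕 (fun x : ℝ => (rexp (-(a * |x|)) : ℂ)) w = ((2 * a / (a ^ 2 + (2 * π * w) ^ 2) : ℝ) : ℂ) := by
  have hneg : EqOn (fun x : ℝ => cexp (↑(-2 * π * x * w) * I) • (rexp (-(a * |x|)) : ℂ))
      (fun x : ℝ => cexp ((a - 2 * π * w * I) * x)) (Iic 0) := by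
    intro x hx
    simp only [smul_eq_mul, abs_of_nonpos (show x ≤ 0 from hx), ofReal_exp, ← Complex.exp_add]
    congr 1
    push_cast
    ring
  have hpos : EqOn (fun x : ℝ => cexp (↑(-2 * π * x * w) * I) • (rexp (-(a * |x|)) : ℂ))
      (fun x : ℝ => cexp ((-a - 2 * π * w * I) * x)) (Ioi 0) := by
    intro x hx
    simp only [smul_eq_mul, abs_of_pos (show 0 < x from hx), ofReal_exp, ← Complex.exp_add]
    congr 1
    push_cast
    ring
  have hre₁ : 0 < (a - 2 * π * w * I : ℂ).re := by simpa using ha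
  have hre₂ : (-a - 2 * π * w * I : ℂ).re < 0 := by simpa using ha
  rw [Real.fourier_real_eq_integral_exp_smul,
    ← integral_Iic_add_Ioi
      ((integrableOn_exp_mul_complex_Iic hre₁ 0).congr_fun hneg.symm measurableSet_Iic)
      ((integrableOn_exp_mul_complex_Ioi hre₂ 0).congr_fun hpos.symm measurableSet_Ioi),
    setIntegral_congr_fun measurableSet_Iic hneg, setIntegral_congr_fun measurableSet_Ioi hpos,
    integral_exp_mul_complex_Iic hre₁, integral_exp_mul_complex_Ioi hre₂]
  have h₁ : (a - 2 * π * w * I : ℂ) ≠ 0 := fun h => by simp [h] at hre₁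
  have h₂ : (-a - 2 * π * w * I : ℂ) ≠ 0 := fun h => by simp [h] at hre₂
  have h₃ : ((a ^ 2 + (2 * π * w) ^ 2 : ℝ) : ℂ) ≠ 0 := by exact_mod_cast (by positivity)
  push_cast at h₃ ⊢
  simp only [mul_zero, Complex.exp_zero]
  rw [div_add_div _ _ h₁ h₂, div_eq_div_iff (mul_ne_zero h₁ h₂) h₃]
  ring_nf
  simp only [I_sq]
  ring

lemma integrable_inv_sq_add_sq {a : ℝ} (ha : a ≠ 0) :
    Integrable fun t : ℝ => (a ^ 2 + t ^ 2)⁻¹ := by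
  refine ((integrable_inv_one_add_sq.comp_mul_left' (inv_ne_zero ha)).const_mul (a ^ 2)⁻¹).congr
    (.of_forall fun t => ?_)
  field_simp

lemma integral_cexp_mul_I_div_sq_add_sq {a : ℝ} (ha : 0 < a) (v : ℝ) :
    ∫ t : ℝ, cexp (↑(t * v) * I) / ↑(a ^ 2 + t ^ 2) = ↑(π / a * rexp (-(a * |v|))) := by
  set f : ℝ → ℂ := fun x => ↑(rexp (-(a * |x|)))
  have hFf : 𝓕 f = fun w => ((2 * a / (a ^ 2 + (2 * π * w) ^ 2) : ℝ) : ℂ) :=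
    funext (fourier_exp_neg_mul_abs ha)
  have hFf_int : Integrable (𝓕 f) := by
    rw [hFf]
    refine (((integrable_inv_sq_add_sq ha.ne').comp_mul_left' (by positivity : 2 * π ≠ 0)).const_mul
      (2 * a)).ofReal.congr (.of_forall fun w => ?_)
    simp [div_eq_mul_inv]
  have hinv := (integrable_exp_neg_mul_abs ha).ofReal.fourierInv_fourier_eq hFf_int
    (v := v) (by fun_prop : Continuous f).continuousAt
  rw [Real.fourierInv_eq_fourier_neg, hFf, Real.fourier_real_eq_integral_exp_smul] at hinv
  set G : ℝ → ℂ := fun t => cexp (↑(t * v) * I) / ↑(a ^ 2 + t ^ 2)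
  have hsubst : ∀ w : ℝ,
      cexp (↑(-2 * π * w * -v) * I) • ((2 * a / (a ^ 2 + (2 * π * w) ^ 2) : ℝ) : ℂ)
        = 2 * a * G (2 * π * w) := by
    intro w
    simp only [G, smul_eq_mul]
    push_cast
    ring_nf
  simp only [hsubst, MeasureTheory.integral_const_mul, Measure.integral_comp_mul_left G, f] at hinv
  rw [abs_of_pos (by positivity : (0 : ℝ) < (2 * π)⁻¹), Complex.real_smul] at hinv
  have ha' : (a : ℂ) ≠ 0 := by exact_mod_cast ha.ne'
  have hπ : (π : ℂ) ≠ 0 := by exact_mod_cast pi_ne_zero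
  push_cast at hinv ⊢
  field_simp at hinv ⊢
  linear_combination hinv

lemma integrable_inv_sq_add_sub_sq_mul_sin {a : ℝ} (ha : a ≠ 0) (k τ₀ : ℝ) :
    Integrable fun τ : ℝ => (a ^ 2 + (τ - τ₀) ^ 2)⁻¹ * Real.sin (k * τ) :=
  ((integrable_inv_sq_add_sq ha).comp_sub_right τ₀).mul_bdd (c := 1) (by fun_prop)
    (.of_forall fun τ => by simpa using abs_sin_le_one (k * τ))

lemma integral_inv_sq_add_sub_sq_mul_sin {a : ℝ} (ha : 0 < a) (k τ₀ : ℝ) :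
    ∫ τ : ℝ, (a ^ 2 + (τ - τ₀) ^ 2)⁻¹ * Real.sin (k * τ)
      = π / a * Real.sin (k * τ₀) * rexp (-(a * |k|)) := by
  set F : ℝ → ℂ := fun τ => cexp (↑(k * τ) * I) / ↑(a ^ 2 + (τ - τ₀) ^ 2)
  have hF : Integrable F := by
    refine (((integrable_inv_sq_add_sq ha.ne').comp_sub_right τ₀).ofReal.bdd_mul (c := 1)
      (f := fun τ => cexp (↑(k * τ) * I))
      (by fun_prop) (.of_forall fun τ => (norm_exp_ofReal_mul_I _).le)).congr
      (.of_forall fun τ => ?_)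
    simp [F, div_eq_mul_inv]
  have hF_integral : ∫ τ, F τ = cexp (↑(k * τ₀) * I) * ↑(π / a * rexp (-(a * |k|))) := by
    rw [← integral_add_right_eq_self F τ₀, ← integral_cexp_mul_I_div_sq_add_sq ha k,
      ← MeasureTheory.integral_const_mul]
    congr 1
    ext s
    simp only [F, add_sub_cancel_right, ← mul_div_assoc, ← Complex.exp_add]
    push_cast
    ring_nf
  have him := integral_im hF
  simp only [RCLike.im_to_complex, hF_integral, F, div_ofReal_im, im_mul_ofReal,
    exp_ofReal_mul_I_im] at him
  simp only [← div_eq_inv_mul, him]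
  ring

lemma integral_symm_sin_mul_eq_zero (k L : ℝ) : ∫ τ in -L..L, Real.sin (k * τ) = 0 := by
  have h := integral_comp_neg (a := -L) (b := L) fun τ => Real.sin (k * τ)
  simp only [mul_neg, Real.sin_neg, intervalIntegral.integral_neg, neg_neg] at h
  linarith

lemma integral_symm_const_add_mul_sin (b k L : ℝ) {g : ℝ → ℝ}
    (hg : IntervalIntegrable (fun τ => g τ * Real.sin (k * τ)) volume (-L) L) :
    ∫ τ in -L..L, (b + g τ) * Real.sin (k * τ) = ∫ τ in -L..L, g τ * Real.sin (k * τ) := by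
  simp only [add_mul]
  rw [integral_add (Continuous.intervalIntegrable (by fun_prop) _ _) hg,
    intervalIntegral.integral_const_mul, integral_symm_sin_mul_eq_zero, mul_zero, zero_add]

/-- Conditional (principal-value) evaluation of the Melnikov integral `I₂ᵃ`:
`lim_{N→∞} ∫_{−Nπ/(2ω)}^{Nπ/(2ω)} (b + 1/(2|h| + (τ−τ₀)²)) sin(2ωτ) dτ
  = π sin(2ωτ₀) e^{−2ω√(2|h|)}/√(2|h|)` for `h < 0`, `b > 0`, `ω = √(2b)`. -/
theorem stmt10 (h b τ₀ : ℝ) (hh : h < 0) (hb : 0 < b) :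
    let ω := Real.sqrt (2 * b)
    Tendsto (fun N : ℕ =>
        ∫ τ in (-(N * π / (2 * ω)))..(N * π / (2 * ω)),
          (b + 1 / (2 * |h| + (τ - τ₀) ^ 2)) * Real.sin (2 * ω * τ))
      atTop
      (nhds (π * Real.sin (2 * ω * τ₀) * Real.exp (-2 * ω * Real.sqrt (2 * |h|)) /
        Real.sqrt (2 * |h|))) := by
  intro ω
  set a := √(2 * |h|)
  have habs : 0 < 2 * |h| := by have := abs_pos.2 hh.ne; positivity
  have ha : 0 < a := sqrt_pos.2 habs
  have ha2 : 2 * |h| = a ^ 2 := (sq_sqrt habs.le).symm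
  have hω : 0 < ω := sqrt_pos.2 (by positivity)
  have hL : Tendsto (fun N : ℕ => N * π / (2 * ω)) atTop atTop := by
    simp only [mul_div_assoc]
    exact tendsto_natCast_atTop_atTop.atTop_mul_const (by positivity)
  have hG := integrable_inv_sq_add_sub_sq_mul_sin ha.ne' (2 * ω) τ₀
  have hlim := intervalIntegral_tendsto_integral hG (tendsto_neg_atTop_atBot.comp hL) hL
  rw [integral_inv_sq_add_sub_sq_mul_sin ha, abs_of_pos (by positivity)] at hlim
  convert hlim using 2 with N
  · simp only [one_div, ha2]
    exact integral_symm_const_add_mul_sin b _ _ hG.intervalIntegrable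
  · rw [neg_mul, neg_mul, mul_comm a]
    field_simp
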